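/- A concrete category E over a base category B is topological (every E-structured source admits an initial lifting) if and only if the associated QB-category Ē is total (every sink on Ē has a supremum, equivalently every source on Ē has an infimum). -/

import Mathlib

universe u

/-- A quantaloid: a category whose hom-sets are complete lattices and whose
composition preserves arbitrary joins in each variable. -/
structure Quantaloid : Type (u + 1) where
  Obj : Type u
  Hom : Obj → Obj → Type u
  [lat : ∀ S T : Obj, CompleteLattice (Hom S T)]
  comp : ∀ {S T U : Obj}, Hom T U → Hom S T → Hom S U
  one : ∀ S : Obj, Hom S S
  comp_assoc : ∀ {S T U V : Obj} (w : Hom U V) (v : Hom T U) (u : Hom S T),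
      comp (comp w v) u = comp w (comp v u)
  comp_one : ∀ {S T : Obj} (u : Hom S T), comp u (one S) = u
  one_comp : ∀ {S T : Obj} (u : Hom S T), comp (one T) u = u
  comp_sSup : ∀ {S T U : Obj} (v : Hom T U) (s : Set (Hom S T)),
      comp v (sSup s) = ⨆ u ∈ s, comp v u
  sSup_comp : ∀ {S T U : Obj} (s : Set (Hom T U)) (u : Hom S T),
      comp (sSup s) u = ⨆ v ∈ s, comp v u

attribute [instance] Quantaloid.lat

namespace Quantaloid

variable (Q : Quantaloid.{u})

/-- The left implication `w ↙ u`, characterized by `v ∘ u ≤ w ↔ v ≤ w ↙ u`. -/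
def lda {S T U : Q.Obj} (w : Q.Hom S U) (u : Q.Hom S T) : Q.Hom T U :=
  sSup {v | Q.comp v u ≤ w}

/-- The right implication `v ↘ w`, characterized by `v ∘ u ≤ w ↔ u ≤ v ↘ w`. -/
def rda {S T U : Q.Obj} (v : Q.Hom T U) (w : Q.Hom S U) : Q.Hom S T :=
  sSup {u | Q.comp v u ≤ w}

/-- Transport of a `Q`-arrow along equalities of objects. -/
def cast {S S' T T' : Q.Obj} (hS : S = S') (hT : T = T') (u : Q.Hom S T) : Q.Hom S' T' :=
  hS ▸ hT ▸ u

variable {Q}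

theorem comp_mono_left {S T U : Q.Obj} {v v' : Q.Hom T U} (h : v ≤ v') (u : Q.Hom S T) :
    Q.comp v u ≤ Q.comp v' u := by
  have h1 : sSup ({v, v'} : Set (Q.Hom T U)) = v' := by
    rw [sSup_pair]; exact sup_eq_right.mpr h
  calc Q.comp v u ≤ ⨆ x ∈ ({v, v'} : Set (Q.Hom T U)), Q.comp x u :=
        le_iSup₂ (f := fun x _ => Q.comp x u) v (by simp)
    _ = Q.comp (sSup ({v, v'} : Set (Q.Hom T U))) u := (Q.sSup_comp _ _).symm
    _ = Q.comp v' u := by rw [h1]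

theorem comp_mono_right {S T U : Q.Obj} (v : Q.Hom T U) {u u' : Q.Hom S T} (h : u ≤ u') :
    Q.comp v u ≤ Q.comp v u' := by
  have h1 : sSup ({u, u'} : Set (Q.Hom S T)) = u' := by
    rw [sSup_pair]; exact sup_eq_right.mpr h
  calc Q.comp v u ≤ ⨆ x ∈ ({u, u'} : Set (Q.Hom S T)), Q.comp v x :=
        le_iSup₂ (f := fun x _ => Q.comp v x) u (by simp)
    _ = Q.comp v (sSup ({u, u'} : Set (Q.Hom S T))) := (Q.comp_sSup _ _).symm
    _ = Q.comp v u' := by rw [h1]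

theorem comp_lda_le {S T U : Q.Obj} (w : Q.Hom S U) (u : Q.Hom S T) :
    Q.comp (Q.lda w u) u ≤ w := by
  rw [lda, Q.sSup_comp]
  exact iSup₂_le fun v hv => hv

theorem comp_rda_le {S T U : Q.Obj} (v : Q.Hom T U) (w : Q.Hom S U) :
    Q.comp v (Q.rda v w) ≤ w := by
  rw [rda, Q.comp_sSup]
  exact iSup₂_le fun u hu => hu

theorem le_lda {S T U : Q.Obj} {u : Q.Hom S T} {v : Q.Hom T U} {w : Q.Hom S U} :
    Q.comp v u ≤ w ↔ v ≤ Q.lda w u :=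
  ⟨fun h => le_sSup h, fun h => le_trans (comp_mono_left h u) (comp_lda_le w u)⟩

theorem le_rda {S T U : Q.Obj} {u : Q.Hom S T} {v : Q.Hom T U} {w : Q.Hom S U} :
    Q.comp v u ≤ w ↔ u ≤ Q.rda v w :=
  ⟨fun h => le_sSup h, fun h => le_trans (comp_mono_right v h) (comp_rda_le v w)⟩

theorem cast_cast {S S' S'' T T' T'' : Q.Obj} (h1 : S = S') (h2 : T = T')
    (h3 : S' = S'') (h4 : T' = T'') (u : Q.Hom S T) :
    Q.cast h3 h4 (Q.cast h1 h2 u) = Q.cast (h1.trans h3) (h2.trans h4) u := by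
  subst h1; subst h2; subst h3; subst h4; rfl

theorem cast_mono {S S' T T' : Q.Obj} (hS : S = S') (hT : T = T') {u v : Q.Hom S T}
    (h : u ≤ v) : Q.cast hS hT u ≤ Q.cast hS hT v := by
  subst hS; subst hT; exact h

end Quantaloid
/-! ## Quantaloid-enriched categories -/

/-- A `Q`-category: a class of objects with extents and hom-arrows in `Q`. -/
structure QCat (Q : Quantaloid.{u}) : Type (u + 1) where
  Obj : Type u
  ext : Obj → Q.Obj
  hom : ∀ X Y : Obj, Q.Hom (ext X) (ext Y)
  one_le : ∀ X, Q.one (ext X) ≤ hom X X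
  comp_le : ∀ X Y Z, Q.comp (hom Y Z) (hom X Y) ≤ hom X Z

/-- A `Q`-relation between (the object classes of) two `Q`-categories. -/
abbrev QRel (Q : Quantaloid.{u}) (D E : QCat Q) : Type u :=
  ∀ (X : D.Obj) (Y : E.Obj), Q.Hom (D.ext X) (E.ext Y)

/-- The hom `Q`-relation of a `Q`-category. -/
def QCat.homRel {Q : Quantaloid.{u}} (E : QCat Q) : QRel Q E E := fun X Y => E.hom X Y

/-- Composition of `Q`-relations. -/
def QRel.comp {Q : Quantaloid.{u}} {C D E : QCat Q} (Ψ : QRel Q D E) (Φ : QRel Q C D) :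
    QRel Q C E :=
  fun X Z => ⨆ Y : D.Obj, Q.comp (Ψ Y Z) (Φ X Y)

/-- Left implication of `Q`-relations: `(Ξ ↙ Φ)(Y,Z) = ⋀_X Ξ(X,Z) ↙ Φ(X,Y)`. -/
def QRel.lda {Q : Quantaloid.{u}} {C D E : QCat Q} (Ξ : QRel Q C E) (Φ : QRel Q C D) :
    QRel Q D E :=
  fun Y Z => ⨅ X : C.Obj, Q.lda (Ξ X Z) (Φ X Y)

/-- Right implication of `Q`-relations: `(Ψ ↘ Ξ)(X,Y) = ⋀_Z Ψ(Y,Z) ↘ Ξ(X,Z)`. -/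
def QRel.rda {Q : Quantaloid.{u}} {C D E : QCat Q} (Ψ : QRel Q D E) (Ξ : QRel Q C E) :
    QRel Q C D :=
  fun X Y => ⨅ Z : E.Obj, Q.rda (Ψ Y Z) (Ξ X Z)

/-- A `Q`-relation between `Q`-categories is a `Q`-distributor if `E ∘ Φ ∘ D ≤ Φ`. -/
def IsDist {Q : Quantaloid.{u}} {D E : QCat Q} (Φ : QRel Q D E) : Prop :=
  QRel.comp E.homRel (QRel.comp Φ D.homRel) ≤ Φ

/-- The one-object `Q`-category on an object `T` of `Q`, with hom `1_T`. -/
def singleQCat (Q : Quantaloid.{u}) (T : Q.Obj) : QCat Q where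
  Obj := PUnit
  ext _ := T
  hom _ _ := Q.one T
  one_le _ := le_rfl
  comp_le _ _ _ := le_of_eq (Q.comp_one _)

/-- A sink of extent `T` on a `Q`-category `E`: a `Q`-relation `E₀ ⇸ {T}`. -/
abbrev Sink {Q : Quantaloid.{u}} (E : QCat Q) (T : Q.Obj) : Type u :=
  QRel Q E (singleQCat Q T)

/-- A source of extent `T` on a `Q`-category `E`: a `Q`-relation `{T} ⇸ E₀`. -/
abbrev Source {Q : Quantaloid.{u}} (E : QCat Q) (T : Q.Obj) : Type u :=
  QRel Q (singleQCat Q T) E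

/-- `Y` is the supremum of the sink `σ`: `Y` has extent `T` and `E(Y,−) = E ↙ σ`. -/
structure IsSup {Q : Quantaloid.{u}} (E : QCat Q) {T : Q.Obj} (σ : Sink E T) (Y : E.Obj) :
    Prop where
  ext : E.ext Y = T
  hom : ∀ Z : E.Obj, Q.cast ext rfl (E.hom Y Z) = QRel.lda E.homRel σ PUnit.unit Z

/-- `Y` is the infimum of the source `τ`: `Y` has extent `T` and `E(−,Y) = τ ↘ E`. -/
structure IsInf {Q : Quantaloid.{u}} (E : QCat Q) {T : Q.Obj} (τ : Source E T) (Y : E.Obj) :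
    Prop where
  ext : E.ext Y = T
  hom : ∀ Z : E.Obj, Q.cast rfl ext (E.hom Z Y) = QRel.rda τ E.homRel Z PUnit.unit

/-- A `Q`-category is total if every sink on it has a supremum. -/
def QCat.Total {Q : Quantaloid.{u}} (E : QCat Q) : Prop :=
  ∀ (T : Q.Obj) (σ : Sink E T), ∃ Y : E.Obj, IsSup E σ Y

/-- A `Q`-functor between `Q`-categories. -/
structure QFun {Q : Quantaloid.{u}} (D E : QCat Q) : Type u where
  obj : D.Obj → E.Obj
  ext : ∀ X, E.ext (obj X) = D.ext X
  hom_le : ∀ X Y, D.hom X Y ≤ Q.cast (ext X) (ext Y) (E.hom (obj X) (obj Y))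

/-- The graph `F_♮(X,Y) = E(FX,Y)` of a `Q`-functor. -/
def QFun.graph {Q : Quantaloid.{u}} {D E : QCat Q} (F : QFun D E) : QRel Q D E :=
  fun X Y => Q.cast (F.ext X) rfl (E.hom (F.obj X) Y)

/-- The cograph `F^♮(Y,X) = E(Y,FX)` of a `Q`-functor. -/
def QFun.cograph {Q : Quantaloid.{u}} {D E : QCat Q} (F : QFun D E) : QRel Q E D :=
  fun Y X => Q.cast rfl (F.ext X) (E.hom Y (F.obj X))

/-- `Y` is the colimit of `F` weighted by the sink `σ`: `E(Y,−) = F_♮ ↙ σ`. -/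
structure IsColim {Q : Quantaloid.{u}} {D E : QCat Q} (F : QFun D E) {T : Q.Obj}
    (σ : Sink D T) (Y : E.Obj) : Prop where
  ext : E.ext Y = T
  hom : ∀ Z : E.Obj, Q.cast ext rfl (E.hom Y Z) = QRel.lda F.graph σ PUnit.unit Z

/-- `Y` is the limit of `F` weighted by the source `τ`: `E(−,Y) = τ ↘ F^♮`. -/
structure IsLim {Q : Quantaloid.{u}} {D E : QCat Q} (F : QFun D E) {T : Q.Obj}
    (τ : Source D T) (Y : E.Obj) : Prop where
  ext : E.ext Y = T
  hom : ∀ Z : E.Obj, Q.cast rfl ext (E.hom Z Y) = QRel.rda τ F.cograph Z PUnit.unit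

/-- A `Q`-functor is dense if every object of its codomain is a weighted colimit of it. -/
def QFun.Dense {Q : Quantaloid.{u}} {D E : QCat Q} (F : QFun D E) : Prop :=
  ∀ Y : E.Obj, ∃ (T : Q.Obj) (σ : Sink D T), IsColim F σ Y

/-- A `Q`-functor is codense if every object of its codomain is a weighted limit of it. -/
def QFun.Codense {Q : Quantaloid.{u}} {D E : QCat Q} (F : QFun D E) : Prop :=
  ∀ Y : E.Obj, ∃ (T : Q.Obj) (τ : Source D T), IsLim F τ Y

/-- The underlying (pre)order of a `Q`-category: `X ≤ Y` iff `|X| = |Y|` and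
`1_{|X|} ≤ E(X,Y)`. -/
def QCat.le {Q : Quantaloid.{u}} (E : QCat Q) (X Y : E.Obj) : Prop :=
  ∃ h : E.ext X = E.ext Y, Q.cast rfl h (Q.one (E.ext X)) ≤ E.hom X Y

/-- `X ≅ Y` in the underlying order of a `Q`-category. -/
def QCat.iso {Q : Quantaloid.{u}} (E : QCat Q) (X Y : E.Obj) : Prop :=
  E.le X Y ∧ E.le Y X

/-- A `Q`-category is separated if isomorphic objects are equal. -/
def QCat.Separated {Q : Quantaloid.{u}} (E : QCat Q) : Prop :=
  ∀ X Y : E.Obj, E.iso X Y → X = Y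

/-- The identity `Q`-functor. -/
def QFun.id {Q : Quantaloid.{u}} (E : QCat Q) : QFun E E where
  obj X := X
  ext _ := rfl
  hom_le _ _ := le_rfl

/-- Composition of `Q`-functors. -/
def QFun.comp {Q : Quantaloid.{u}} {C D E : QCat Q} (G : QFun D E) (F : QFun C D) :
    QFun C E where
  obj X := G.obj (F.obj X)
  ext X := (G.ext (F.obj X)).trans (F.ext X)
  hom_le X Y := by
    refine le_trans (F.hom_le X Y) ?_
    refine le_trans (Quantaloid.cast_mono (F.ext X) (F.ext Y)
      (G.hom_le (F.obj X) (F.obj Y))) ?_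
    rw [Quantaloid.cast_cast]

/-- The full `Q`-subcategory of `E` on the objects satisfying `P`. -/
def QCat.full {Q : Quantaloid.{u}} (E : QCat Q) (P : E.Obj → Prop) : QCat Q where
  Obj := {X : E.Obj // P X}
  ext X := E.ext X.1
  hom X Y := E.hom X.1 Y.1
  one_le X := E.one_le X.1
  comp_le X Y Z := E.comp_le X.1 Y.1 Z.1

/-- The inclusion `Q`-functor of a full `Q`-subcategory. -/
def QCat.incl {Q : Quantaloid.{u}} (E : QCat Q) (P : E.Obj → Prop) :
    QFun (E.full P) E where
  obj X := X.1
  ext _ := rfl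
  hom_le _ _ := le_rfl

/-- The full `Q`-subcategory of fixed points of an endo-`Q`-functor. -/
def QCat.fix {Q : Quantaloid.{u}} (E : QCat Q) (F : QFun E E) : QCat Q :=
  E.full (fun X => E.iso (F.obj X) X)

/-- Adjoint `Q`-functors: `L ⊣ R` iff `E(LX,Y) = D(X,RY)`. -/
def QAdj {Q : Quantaloid.{u}} {D E : QCat Q} (L : QFun D E) (R : QFun E D) : Prop :=
  ∀ (X : D.Obj) (Y : E.Obj), L.graph X Y = Q.cast rfl (R.ext Y) (D.hom X (R.obj Y))

/-- An essentially surjective `Q`-functor. -/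
def QFun.EssSurj {Q : Quantaloid.{u}} {D E : QCat Q} (F : QFun D E) : Prop :=
  ∀ Y : E.Obj, ∃ X : D.Obj, E.iso Y (F.obj X)

/-- Equivalence of `Q`-categories. -/
def QEquiv {Q : Quantaloid.{u}} (D E : QCat Q) : Prop :=
  ∃ (F : QFun D E) (G : QFun E D),
    (∀ X, D.iso (G.obj (F.obj X)) X) ∧ (∀ Y, E.iso (F.obj (G.obj Y)) Y)

/-- Isomorphism of `Q`-categories. -/
def QIso {Q : Quantaloid.{u}} (D E : QCat Q) : Prop :=
  ∃ (F : QFun D E) (G : QFun E D),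
    (∀ X, G.obj (F.obj X) = X) ∧ (∀ Y, F.obj (G.obj Y) = Y)

/-- Tensor: `Y = f ⊗ X` iff `E(Y,−) = E(X,−) ↙ f`. -/
structure IsTensor {Q : Quantaloid.{u}} (E : QCat Q) {T : Q.Obj} (X : E.Obj)
    (f : Q.Hom (E.ext X) T) (Y : E.Obj) : Prop where
  ext : E.ext Y = T
  hom : ∀ Z : E.Obj, Q.cast ext rfl (E.hom Y Z) = Q.lda (E.hom X Z) f

/-- Cotensor: `Y = g ⤳ X` iff `E(−,Y) = g ↘ E(−,X)`. -/
structure IsCotensor {Q : Quantaloid.{u}} (E : QCat Q) {T : Q.Obj} (X : E.Obj)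
    (g : Q.Hom T (E.ext X)) (Y : E.Obj) : Prop where
  ext : E.ext Y = T
  hom : ∀ Z : E.Obj, Q.cast rfl ext (E.hom Z Y) = Q.rda g (E.hom Z X)
/-! ## The Isbell adjunction and its fixed points -/

section MCat

variable {Q : Quantaloid.{u}} {D E : QCat Q}

/-- The Isbell upper map of a `Q`-distributor `Φ : D ⇸ E` on (pre)sheaves:
`Φ↑σ = Φ ↙ σ`. -/
def isbellUp (Φ : QRel Q D E) {T : Q.Obj} (σ : Sink D T) : Source E T :=
  QRel.lda Φ σ

/-- The Isbell lower map of a `Q`-distributor `Φ : D ⇸ E` on (co)presheaves: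
`Φ↓τ = τ ↘ Φ`. -/
def isbellDown (Φ : QRel Q D E) {T : Q.Obj} (τ : Source E T) : Sink D T :=
  QRel.rda τ Φ

/-- `MΦ = Fix(Φ↓Φ↑)`: the full `Q`-subcategory of the presheaf `Q`-category of `D`
consisting of the presheaves fixed by the Isbell adjunction induced by `Φ`. -/
def MCat (Φ : QRel Q D E) : QCat Q where
  Obj := Σ T : Q.Obj, {σ : Sink D T // IsDist σ ∧ isbellDown Φ (isbellUp Φ σ) = σ}
  ext p := p.1
  hom p q := QRel.lda q.2.1 p.2.1 PUnit.unit PUnit.unit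
  one_le p := by
    refine le_iInf fun X => Quantaloid.le_lda.mp ?_
    exact le_of_eq (Q.one_comp _)
  comp_le p q r := by
    refine le_iInf fun X => Quantaloid.le_lda.mp ?_
    refine (le_of_eq (Q.comp_assoc _ _ _)).trans ?_
    have h1 : Q.comp (QRel.lda q.2.1 p.2.1 PUnit.unit PUnit.unit) (p.2.1 X PUnit.unit) ≤
        q.2.1 X PUnit.unit := by
      refine le_trans (Quantaloid.comp_mono_left (iInf_le _ X) _) ?_
      exact Quantaloid.comp_lda_le _ _
    refine le_trans (Quantaloid.comp_mono_right _ h1) ?_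
    refine le_trans (Quantaloid.comp_mono_left (iInf_le _ X) _) ?_
    exact Quantaloid.comp_lda_le _ _

end MCat
/-! ## Concrete categories over a base category -/

open CategoryTheory

/-- Transport of a morphism of `B` along equalities of objects. -/
def hcast {B : Type u} [Category.{u} B] {S S' T T' : B} (hS : S = S') (hT : T = T')
    (f : S ⟶ T) : S' ⟶ T' :=
  hS ▸ hT ▸ f

/-- Transport of a set of morphisms of `B` along equalities of objects. -/
def scast {B : Type u} [Category.{u} B] {S S' T T' : B} (hS : S = S') (hT : T = T')
    (s : Set (S ⟶ T)) : Set (S' ⟶ T') :=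
  hcast hS hT '' s

theorem hcast_hcast {B : Type u} [Category.{u} B] {S S' S'' T T' T'' : B}
    (h1 : S = S') (h2 : T = T') (h3 : S' = S'') (h4 : T' = T'') (f : S ⟶ T) :
    hcast h3 h4 (hcast h1 h2 f) = hcast (h1.trans h3) (h2.trans h4) f := by
  subst h1; subst h2; subst h3; subst h4; rfl

/-- A concrete category over a base category `B`, described by its objects, extents
and hom-sets of `B`-morphisms. -/
structure ConcCat (B : Type u) [Category.{u} B] : Type (u + 1) where
  Obj : Type u
  ext : Obj → B
  hom : ∀ X Y : Obj, Set (ext X ⟶ ext Y)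
  id_mem : ∀ X, 𝟙 (ext X) ∈ hom X X
  comp_mem : ∀ {X Y Z : Obj} {f : ext X ⟶ ext Y} {g : ext Y ⟶ ext Z},
      f ∈ hom X Y → g ∈ hom Y Z → f ≫ g ∈ hom X Z

variable {B : Type u} [Category.{u} B]

/-- A concrete functor over `B`. -/
structure ConcFun (D E : ConcCat B) : Type u where
  obj : D.Obj → E.Obj
  ext : ∀ X, E.ext (obj X) = D.ext X
  mem : ∀ {X Y : D.Obj} {f : D.ext X ⟶ D.ext Y}, f ∈ D.hom X Y →
      hcast (ext X).symm (ext Y).symm f ∈ E.hom (obj X) (obj Y)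

/-- The underlying (pre)order of a concrete category: `X ≤ Y` iff `|X| = |Y|` and
`1_{|X|} ∈ E(X,Y)`. -/
def ConcCat.le (E : ConcCat B) (X Y : E.Obj) : Prop :=
  ∃ h : E.ext X = E.ext Y, hcast rfl h (𝟙 (E.ext X)) ∈ E.hom X Y

/-- `X ≅ Y` in the underlying order of a concrete category. -/
def ConcCat.iso (E : ConcCat B) (X Y : E.Obj) : Prop :=
  E.le X Y ∧ E.le Y X

/-- The identity concrete functor. -/
def ConcFun.id (E : ConcCat B) : ConcFun E E where
  obj X := X
  ext _ := rfl
  mem hf := hf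

/-- Composition of concrete functors. -/
def ConcFun.comp {C D E : ConcCat B} (G : ConcFun D E) (F : ConcFun C D) :
    ConcFun C E where
  obj X := G.obj (F.obj X)
  ext X := (G.ext (F.obj X)).trans (F.ext X)
  mem {X Y f} hf := by
    have h := G.mem (F.mem hf)
    rw [hcast_hcast] at h
    exact h

/-- The full concrete subcategory on the objects satisfying `P`. -/
def ConcCat.full (E : ConcCat B) (P : E.Obj → Prop) : ConcCat B where
  Obj := {X : E.Obj // P X}
  ext X := E.ext X.1
  hom X Y := E.hom X.1 Y.1
  id_mem X := E.id_mem X.1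
  comp_mem hf hg := E.comp_mem hf hg

/-- The inclusion concrete functor of a full subcategory. -/
def ConcCat.incl (E : ConcCat B) (P : E.Obj → Prop) : ConcFun (E.full P) E where
  obj X := X.1
  ext _ := rfl
  mem hf := hf

/-- The full subcategory of fixed points of an endo concrete functor. -/
def ConcCat.fix (E : ConcCat B) (F : ConcFun E E) : ConcCat B :=
  E.full (fun X => E.iso (F.obj X) X)

/-- A Galois correspondence `(L,R)` between concrete categories:
`E(LX,Y) = D(X,RY)` as subsets of `B(|X|,|Y|)`. -/
def Galois {D E : ConcCat B} (L : ConcFun D E) (R : ConcFun E D) : Prop :=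
  ∀ (X : D.Obj) (Y : E.Obj),
    scast (L.ext X) rfl (E.hom (L.obj X) Y) = scast rfl (R.ext Y) (D.hom X (R.obj Y))

/-- An essentially surjective concrete functor. -/
def ConcFun.EssSurj {D E : ConcCat B} (F : ConcFun D E) : Prop :=
  ∀ Y : E.Obj, ∃ X : D.Obj, E.iso Y (F.obj X)

/-- Concrete equivalence of concrete categories. -/
def ConcEquiv (D E : ConcCat B) : Prop :=
  ∃ (F : ConcFun D E) (G : ConcFun E D),
    (∀ X, D.iso (G.obj (F.obj X)) X) ∧ (∀ Y, E.iso (F.obj (G.obj Y)) Y)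

/-- `Y` is an initial lifting of the `E`-structured source `(g_i : T → |X_i|)`. -/
structure IsInitialLifting (E : ConcCat B) {T : B} {ι : Type u} (X : ι → E.Obj)
    (g : ∀ i, T ⟶ E.ext (X i)) (Y : E.Obj) : Prop where
  ext : E.ext Y = T
  mem : ∀ i, hcast ext.symm rfl (g i) ∈ E.hom Y (X i)
  initial : ∀ (Z : E.Obj) (f : E.ext Z ⟶ T),
      (∀ i, f ≫ g i ∈ E.hom Z (X i)) → hcast rfl ext.symm f ∈ E.hom Z Y

/-- `Y` is a final lifting of the `E`-structured sink `(f_i : |X_i| → T)`. -/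
structure IsFinalLifting (E : ConcCat B) {T : B} {ι : Type u} (X : ι → E.Obj)
    (f : ∀ i, E.ext (X i) ⟶ T) (Y : E.Obj) : Prop where
  ext : E.ext Y = T
  mem : ∀ i, hcast rfl ext.symm (f i) ∈ E.hom (X i) Y
  final : ∀ (Z : E.Obj) (g : T ⟶ E.ext Z),
      (∀ i, f i ≫ g ∈ E.hom (X i) Z) → hcast ext.symm rfl g ∈ E.hom Y Z

/-- A concrete category is topological over `B` if every structured source admits
an initial lifting. -/
def Topological (E : ConcCat B) : Prop :=
  ∀ (T : B) (ι : Type u) (X : ι → E.Obj) (g : ∀ i, T ⟶ E.ext (X i)),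
    ∃ Y : E.Obj, IsInitialLifting E X g Y

/-- A concrete functor `F : D → E` is initially dense if every object of `E` is the
domain of an initial source with codomains in the image of `F`. -/
def InitiallyDense {D E : ConcCat B} (F : ConcFun D E) : Prop :=
  ∀ Y : E.Obj, ∃ (ι : Type u) (X : ι → D.Obj) (g : ∀ i, E.ext Y ⟶ E.ext (F.obj (X i))),
    (∀ i, g i ∈ E.hom Y (F.obj (X i))) ∧
    ∀ (Z : E.Obj) (f : E.ext Z ⟶ E.ext Y),
      (∀ i, f ≫ g i ∈ E.hom Z (F.obj (X i))) → f ∈ E.hom Z Y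

/-- A concrete functor `F : D → E` is finally dense if every object of `E` is the
codomain of a final sink with domains in the image of `F`. -/
def FinallyDense {D E : ConcCat B} (F : ConcFun D E) : Prop :=
  ∀ Y : E.Obj, ∃ (ι : Type u) (X : ι → D.Obj) (f : ∀ i, E.ext (F.obj (X i)) ⟶ E.ext Y),
    (∀ i, f i ∈ E.hom (F.obj (X i)) Y) ∧
    ∀ (Z : E.Obj) (g : E.ext Y ⟶ E.ext Z),
      (∀ i, f i ≫ g ∈ E.hom (F.obj (X i)) Z) → g ∈ E.hom Y Z
/-! ## The free quantaloid and the `QB`-category associated to a concrete category -/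

/-- The free quantaloid on a category `B`: hom-lattices are powersets of hom-sets,
with elementwise composition. -/
def freeQuantaloid (B : Type u) [Category.{u} B] : Quantaloid.{u} where
  Obj := B
  Hom S T := Set (S ⟶ T)
  lat _ _ := inferInstance
  comp := fun {S T U} g f => {h | ∃ a ∈ f, ∃ b ∈ g, a ≫ b = h}
  one S := {𝟙 S}
  comp_assoc := by
    intro S T U V w v u
    ext h
    constructor
    · rintro ⟨a, ha, b, ⟨c, hc, d, hd, rfl⟩, rfl⟩
      exact ⟨a ≫ c, ⟨a, ha, c, hc, rfl⟩, d, hd, by simp⟩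
    · rintro ⟨a, ⟨c, hc, e, he, rfl⟩, b, hb, rfl⟩
      exact ⟨c, hc, e ≫ b, ⟨e, he, b, hb, rfl⟩, by simp⟩
  comp_one := by
    intro S T u
    ext h
    simp
  one_comp := by
    intro S T u
    ext h
    simp
  comp_sSup := by
    intro S T U v s
    ext h
    simp only [Set.sSup_eq_sUnion, Set.mem_sUnion, Set.iSup_eq_iUnion, Set.mem_iUnion,
      Set.mem_setOf_eq]
    constructor
    · rintro ⟨a, ⟨t, ht, hat⟩, b, hb, rfl⟩
      exact ⟨t, ht, a, hat, b, hb, rfl⟩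
    · rintro ⟨t, ht, a, hat, b, hb, rfl⟩
      exact ⟨a, ⟨t, ht, hat⟩, b, hb, rfl⟩
  sSup_comp := by
    intro S T U s u
    ext h
    simp only [Set.sSup_eq_sUnion, Set.mem_sUnion, Set.iSup_eq_iUnion, Set.mem_iUnion,
      Set.mem_setOf_eq]
    constructor
    · rintro ⟨a, ha, b, ⟨t, ht, hbt⟩, rfl⟩
      exact ⟨t, ht, a, ha, b, hbt, rfl⟩
    · rintro ⟨t, ht, a, ha, b, hbt, rfl⟩
      exact ⟨a, ha, b, ⟨t, ht, hbt⟩, rfl⟩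

variable {B : Type u} [Category.{u} B]

instance {S T : B} : Membership (S ⟶ T) ((freeQuantaloid B).Hom S T) :=
  inferInstanceAs (Membership (S ⟶ T) (Set (S ⟶ T)))

theorem mem_qcast {S S' T T' : B} (hS : S = S') (hT : T = T')
    (s : Set (S ⟶ T)) (f : S' ⟶ T') :
    f ∈ (freeQuantaloid B).cast hS hT s ↔ hcast hS.symm hT.symm f ∈ s := by
  subst hS; subst hT; exact Iff.rfl

/-- The `QB`-category associated to a concrete category over `B`. -/
def ConcCat.bar (E : ConcCat B) : QCat (freeQuantaloid B) where
  Obj := E.Obj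
  ext := E.ext
  hom := E.hom
  one_le X := by
    intro h hh
    rcases hh with rfl
    exact E.id_mem X
  comp_le X Y Z := by
    rintro h ⟨a, ha, b, hb, rfl⟩
    exact E.comp_mem ha hb

/-- The `QB`-functor associated to a concrete functor over `B`. -/
def ConcFun.bar {D E : ConcCat B} (F : ConcFun D E) : QFun D.bar E.bar where
  obj := F.obj
  ext := F.ext
  hom_le X Y := by
    intro f hf
    exact (mem_qcast (F.ext X) (F.ext Y) _ f).mpr (F.mem hf)

/-- The source on the `QB`-category `Ē` associated to an `E`-structured source
`(g_i : T → |X_i|)`, given by `τ̄(X) = {g_i ∣ X_i = X}`. -/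
def barSource (E : ConcCat B) {T : B} {ι : Type u} (X : ι → E.Obj)
    (g : ∀ i, T ⟶ E.ext (X i)) : Source E.bar T :=
  fun _ Z => {f | ∃ (i : ι) (h : X i = Z), hcast rfl (congrArg E.ext h) (g i) = f}

/-- The sink on the `QB`-category `Ē` associated to an `E`-structured sink
`(f_i : |X_i| → T)`, given by `σ̄(X) = {f_i ∣ X_i = X}`. -/
def barSink (E : ConcCat B) {T : B} {ι : Type u} (X : ι → E.Obj)
    (f : ∀ i, E.ext (X i) ⟶ T) : Sink E.bar T :=
  fun Z _ => {h | ∃ (i : ι) (hE : X i = Z), hcast (congrArg E.ext hE) rfl (f i) = h}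

/-!
A source `τ` of extent `T` on `Ē` is just a set of `E`-structured maps out of `T`, and an
infimum of `τ` in `Ē` is precisely an initial lifting of that structured source (and every
structured source induces a source on `Ē` with the same initial liftings). So `E` is
topological iff every source on `Ē` has an infimum. Totality is equivalent to this, since
`sup σ` is `inf (Ē ↙ σ)` and `inf τ` is `sup (τ ↘ Ē)`.
-/

namespace freeQuantaloid

/-- Extents in a `QB`-category live in `(freeQuantaloid B).Obj`, which is `B` only after
unfolding, so instance search finds no `Membership` on their arrows; `toSet` exposes such an
arrow as a set of `B`-morphisms. -/
abbrev toSet {S T : B} (u : (freeQuantaloid B).Hom S T) : Set (S ⟶ T) := u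

theorem mem_lda {S T U : B} {w : (freeQuantaloid B).Hom S U} {u : (freeQuantaloid B).Hom S T}
    {b : T ⟶ U} :
    b ∈ toSet ((freeQuantaloid B).lda w u) ↔ ∀ a ∈ toSet u, a ≫ b ∈ toSet w := by
  constructor
  · rintro ⟨v, hv, hbv⟩ a ha
    exact hv ⟨a, ha, b, hbv, rfl⟩
  · intro h
    refine ⟨{b}, ?_, rfl⟩
    rintro _ ⟨a, ha, _, rfl, rfl⟩
    exact h a ha

theorem mem_rda {S T U : B} {v : (freeQuantaloid B).Hom T U} {w : (freeQuantaloid B).Hom S U}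
    {a : S ⟶ T} :
    a ∈ toSet ((freeQuantaloid B).rda v w) ↔ ∀ b ∈ toSet v, a ≫ b ∈ toSet w := by
  constructor
  · rintro ⟨u, hu, hau⟩ b hb
    exact hu ⟨a, hau, b, hb, rfl⟩
  · intro h
    refine ⟨{a}, ?_, rfl⟩
    rintro _ ⟨_, rfl, b, hb, rfl⟩
    exact h b hb

end freeQuantaloid

open freeQuantaloid

namespace QRel

variable {C D E : QCat (freeQuantaloid B)}

theorem mem_lda {Ξ : QRel _ C E} {Φ : QRel _ C D} {Y : D.Obj} {Z : E.Obj} {b} :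
    b ∈ toSet (QRel.lda Ξ Φ Y Z) ↔ ∀ X, ∀ a ∈ toSet (Φ X Y), a ≫ b ∈ toSet (Ξ X Z) :=
  Set.mem_iInter.trans (forall_congr' fun _ => freeQuantaloid.mem_lda)

theorem mem_rda {Ψ : QRel _ D E} {Ξ : QRel _ C E} {X : C.Obj} {Y : D.Obj} {a} :
    a ∈ toSet (QRel.rda Ψ Ξ X Y) ↔ ∀ Z, ∀ b ∈ toSet (Ψ Y Z), a ≫ b ∈ toSet (Ξ X Z) :=
  Set.mem_iInter.trans (forall_congr' fun _ => freeQuantaloid.mem_rda)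

end QRel

def QCat.HasInfs {Q : Quantaloid.{u}} (E : QCat Q) : Prop :=
  ∀ (T : Q.Obj) (τ : Source E T), ∃ Y : E.Obj, IsInf E τ Y

namespace ConcCat

variable (E : ConcCat B)

theorem mem_rda_barSource {T : B} {ι : Type u} {X : ι → E.Obj} {g : ∀ i, T ⟶ E.ext (X i)}
    {Z : E.Obj} {f : E.ext Z ⟶ T} :
    f ∈ toSet (QRel.rda (barSource E X g) E.bar.homRel Z PUnit.unit) ↔
      ∀ i, f ≫ g i ∈ E.hom Z (X i) := by
  refine QRel.mem_rda.trans ⟨fun h i => h (X i) (g i) ⟨i, rfl, rfl⟩, ?_⟩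
  rintro h _ _ ⟨i, rfl, rfl⟩
  exact h i

theorem barSource_sigma {T : B} (τ : Source E.bar T) :
    barSource E (fun p : Σ Z, toSet (τ PUnit.unit Z) => p.1) (fun p => p.2.1) = τ := by
  funext _ Z
  refine Set.ext fun c => ⟨?_, ?_⟩
  · rintro ⟨⟨_, c, hc⟩, rfl, rfl⟩
    exact hc
  · exact fun hc => ⟨⟨Z, c, hc⟩, rfl, rfl⟩

theorem isInf_barSource_iff {T : B} {ι : Type u} (X : ι → E.Obj) (g : ∀ i, T ⟶ E.ext (X i))
    (Y : E.Obj) : IsInf E.bar (barSource E X g) Y ↔ IsInitialLifting E X g Y := by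
  constructor
  · rintro ⟨rfl, hY⟩
    have hY' : ∀ Z f, f ∈ E.hom Z Y ↔ ∀ i, f ≫ g i ∈ E.hom Z (X i) :=
      fun Z f => (Set.ext_iff.1 (hY Z) f).trans (mem_rda_barSource E)
    refine ⟨rfl, fun i => ?_, fun Z f hf => (hY' Z f).2 hf⟩
    exact Category.id_comp (g i) ▸ (hY' Y (𝟙 _)).1 (E.id_mem Y) i
  · rintro ⟨rfl, hg, hinit⟩
    refine ⟨rfl, fun Z => Set.ext fun f => ?_⟩
    refine ⟨fun hf => (mem_rda_barSource E).2 fun i => E.comp_mem hf (hg i), fun hf => ?_⟩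
    exact hinit Z f ((mem_rda_barSource E).1 hf)

theorem isSup_of_isInf_lda {T : B} {σ : Sink E.bar T} {Y : E.Obj}
    (h : IsInf E.bar (QRel.lda E.bar.homRel σ) Y) : IsSup E.bar σ Y := by
  obtain ⟨rfl, hY⟩ := h
  have hY' : ∀ Z f, f ∈ E.hom Z Y ↔
      f ∈ toSet (QRel.rda (QRel.lda E.bar.homRel σ) E.bar.homRel Z PUnit.unit) :=
    fun Z => Set.ext_iff.1 (hY Z)
  refine ⟨rfl, fun Z => Set.ext fun b => ⟨fun hb => QRel.mem_lda.2 ?_, fun hb => ?_⟩⟩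
  · intro W a ha
    have haY : a ∈ E.hom W Y :=
      (hY' W a).2 <| QRel.mem_rda.2 fun _ _ hc => QRel.mem_lda.1 hc W a ha
    exact E.comp_mem haY hb
  · exact Category.id_comp b ▸ QRel.mem_rda.1 ((hY' Y (𝟙 _)).1 (E.id_mem Y)) Z b hb

theorem isInf_of_isSup_rda {T : B} {τ : Source E.bar T} {Y : E.Obj}
    (h : IsSup E.bar (QRel.rda τ E.bar.homRel) Y) : IsInf E.bar τ Y := by
  obtain ⟨rfl, hY⟩ := h
  have hY' : ∀ Z f, f ∈ E.hom Y Z ↔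
      f ∈ toSet (QRel.lda E.bar.homRel (QRel.rda τ E.bar.homRel) PUnit.unit Z) :=
    fun Z => Set.ext_iff.1 (hY Z)
  refine ⟨rfl, fun Z => Set.ext fun a => ⟨fun ha => QRel.mem_rda.2 ?_, fun ha => ?_⟩⟩
  · intro W b hb
    have hbY : b ∈ E.hom Y W :=
      (hY' W b).2 <| QRel.mem_lda.2 fun _ _ hc => QRel.mem_rda.1 hc W b hb
    exact E.comp_mem ha hbY
  · exact Category.comp_id a ▸ QRel.mem_lda.1 ((hY' Y (𝟙 _)).1 (E.id_mem Y)) Z a ha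

theorem topological_iff_hasInfs : Topological E ↔ E.bar.HasInfs := by
  constructor
  · intro h T τ
    obtain ⟨Y, hY⟩ := h T _ (fun p : Σ Z, toSet (τ PUnit.unit Z) => p.1) (fun p => p.2.1)
    exact ⟨Y, barSource_sigma E τ ▸ (isInf_barSource_iff E _ _ Y).2 hY⟩
  · exact fun h T ι X g => (h T (barSource E X g)).imp fun Y => (isInf_barSource_iff E X g Y).1

theorem hasInfs_iff_total : E.bar.HasInfs ↔ E.bar.Total :=
  ⟨fun h T _ => (h T _).imp fun _ => isSup_of_isInf_lda E,
    fun h T _ => (h T _).imp fun _ => isInf_of_isSup_rda E⟩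

end ConcCat

/-- Proposition 4.8, Garner: a concrete category `E` over `B` is
topological if and only if the associated `QB`-category `Ē` is total. -/
theorem topological_iff_total {B : Type u} [CategoryTheory.Category.{u} B]
    (E : ConcCat B) :
    Topological E ↔ QCat.Total E.bar :=
  E.topological_iff_hasInfs.trans E.hasInfs_iff_total
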